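/- arXiv:1511.05803 — 7 statements merged into one kernel-verified Lean document; each statement's English description precedes it below -/
import Mathlib

section
/- Let S : F → G be a nonzero continuous linear map between real Hilbert spaces, let (η_j)_{j ∈ J} be an orthonormal family in F and λ_1 ≥ λ_2 ≥ ⋯ > 0 reals with S*(S η_j) = λ_j·η_j for all j ∈ J, and suppose (λ_j^{-1/2}·S η_j)_{j ∈ J} is a complete orthonormal system of the closure of the range of S in G. Fix m ∈ J and suppose h ∈ G satisfies ⟨h, S η_j⟩_G = 0 for all j ≤ m. Then ‖S* h‖_F² ≤ λ'·‖h‖_G², where λ' = sup_{j ∈ J, j > m} λ_j (with λ' = 0 if no index j > m exists). -/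
/-!
The vector `w = S* h` lies in the closed span of `{η j : m < j}`. It is orthogonal to every
`u ⊥ η`, since `S u` lies in the closure of the range of `S` but is orthogonal to the complete
system `(√(lam j))⁻¹ • S (η j)` (because `S* S (η j) ∈ span η`), so `S u = 0`; and
`⟪w, η j⟫ = ⟪h, S (η j)⟫ = 0` for `j ≤ m`. On that closed span `‖S v‖² = ⟪v, S* S v⟫ ≤ λ' ‖v‖²`,
and `‖w‖² = ⟪h, S w⟫ ≤ ‖h‖ ‖S w‖ ≤ √λ' ‖h‖ ‖w‖`.
-/

open scoped InnerProduct RealInnerProductSpace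
open Submodule

section RCLike

variable {𝕜 E F : Type*} [RCLike 𝕜]
  [NormedAddCommGroup E] [InnerProductSpace 𝕜 E] [CompleteSpace E]
  [NormedAddCommGroup F] [InnerProductSpace 𝕜 F] [CompleteSpace F]

theorem Submodule.IsOrtho.mem_topologicalClosure_of_mem_orthogonal {A B : Submodule 𝕜 E}
    (hAB : A ⟂ B) {w : E} (hw : w ∈ (A ⊔ B).topologicalClosure) (hwA : w ∈ Aᗮ) :
    w ∈ B.topologicalClosure := by
  have : CompleteSpace B.topologicalClosure := B.isClosed_topologicalClosure.completeSpace_coe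
  obtain ⟨p, hp, r, hr, rfl⟩ := B.topologicalClosure.exists_add_mem_mem_orthogonal w
  have hpA : p ∈ Aᗮ := B.topologicalClosure_minimal hAB.ge A.isClosed_orthogonal hp
  have hr_perp : r ∈ (A ⊔ B).topologicalClosureᗮ := by
    rw [orthogonal_closure, ← inf_orthogonal, ← orthogonal_closure B]
    exact ⟨(add_mem_cancel_left hpA).1 hwA, hr⟩
  have hr_mem : r ∈ (A ⊔ B).topologicalClosure :=
    (add_mem_cancel_left (topologicalClosure_mono le_sup_right hp)).1 hw
  rw [inner_self_eq_zero.1 (inner_right_of_mem_orthogonal hr_mem hr_perp), add_zero]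
  exact hp

theorem Orthonormal.mem_topologicalClosure_span_image {ι : Type*} {η : ι → E}
    (hη : Orthonormal 𝕜 η) (s : Set ι) {w : E}
    (hw : w ∈ (span 𝕜 (Set.range η)).topologicalClosure) (hperp : ∀ j ∉ s, inner 𝕜 (η j) w = 0) :
    w ∈ (span 𝕜 (η '' s)).topologicalClosure := by
  have hdisj : span 𝕜 (η '' sᶜ) ⟂ span 𝕜 (η '' s) := by
    rw [isOrtho_span]
    rintro _ ⟨i, hi, rfl⟩ _ ⟨j, hj, rfl⟩
    exact hη.inner_eq_zero (ne_of_mem_of_not_mem hj hi).symm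
  refine hdisj.mem_topologicalClosure_of_mem_orthogonal ?_ ?_
  · rwa [← span_union, ← Set.image_union, Set.compl_union_self, Set.image_univ]
  · refine (isOrtho_span.2 ?_).ge (mem_span_singleton_self w)
    rintro _ ⟨j, hj, rfl⟩ _ rfl
    exact hperp j hj

namespace ContinuousLinearMap

theorem adjoint_apply_mem_topologicalClosure {T : E →L[𝕜] F} {U : Submodule 𝕜 F}
    {W : Submodule 𝕜 E} (hT : LinearMap.range (T : E →ₗ[𝕜] F) ≤ U.topologicalClosure)
    (hU : U.map (T† : F →ₗ[𝕜] E) ≤ W) (y : F) : (T†) y ∈ W.topologicalClosure := by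
  rw [← orthogonal_orthogonal_eq_closure]
  intro u hu
  have hTu : T u ∈ U.topologicalClosureᗮ := by
    rw [orthogonal_closure]
    intro z hz
    rw [← adjoint_inner_left]
    exact inner_right_of_mem_orthogonal (hU ⟨z, hz, rfl⟩) hu
  have hTu_zero : T u = 0 :=
    inner_self_eq_zero.1 (inner_right_of_mem_orthogonal (hT ⟨u, rfl⟩) hTu)
  rw [adjoint_inner_right, hTu_zero, inner_zero_left]

theorem norm_adjoint_apply_sq_le {T : E →L[𝕜] F} {c : ℝ} (hc : 0 ≤ c) (y : F)
    (hTw : ‖T ((T†) y)‖ ^ 2 ≤ c * ‖(T†) y‖ ^ 2) : ‖(T†) y‖ ^ 2 ≤ c * ‖y‖ ^ 2 := by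
  set w := (T†) y
  have hw : ‖w‖ ^ 2 ≤ ‖y‖ * ‖T w‖ := by
    rw [← inner_self_eq_norm_sq (𝕜 := 𝕜), adjoint_inner_left]
    exact re_inner_le_norm y (T w)
  have hw' : ‖w‖ ^ 2 * ‖w‖ ^ 2 ≤ (c * ‖y‖ ^ 2) * ‖w‖ ^ 2 :=
    calc ‖w‖ ^ 2 * ‖w‖ ^ 2 ≤ (‖y‖ * ‖T w‖) ^ 2 := by rw [← sq]; gcongr
      _ = ‖y‖ ^ 2 * ‖T w‖ ^ 2 := mul_pow _ _ _
      _ ≤ ‖y‖ ^ 2 * (c * ‖w‖ ^ 2) := by gcongr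
      _ = (c * ‖y‖ ^ 2) * ‖w‖ ^ 2 := by ring
  rcases (sq_nonneg ‖w‖).eq_or_lt with hw0 | hw0
  · rw [← hw0]
    positivity
  · exact le_of_mul_le_mul_right hw' hw0

end ContinuousLinearMap

end RCLike

section Real

variable {ι E F : Type*} [NormedAddCommGroup E] [InnerProductSpace ℝ E] [CompleteSpace E]
  [NormedAddCommGroup F] [InnerProductSpace ℝ F] [CompleteSpace F]
  {η : ι → E} {T : E →L[ℝ] F} {lam : ι → ℝ} {c : ℝ} {s : Set ι}

theorem Orthonormal.norm_apply_sq_le_of_mem_span (hη : Orthonormal ℝ η)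
    (heig : ∀ j ∈ s, (T†) (T (η j)) = lam j • η j) (hlam : ∀ j ∈ s, lam j ≤ c) {v : E}
    (hv : v ∈ span ℝ (η '' s)) : ‖T v‖ ^ 2 ≤ c * ‖v‖ ^ 2 := by
  obtain ⟨l, hls, rfl⟩ := (Finsupp.mem_span_image_iff_linearCombination ℝ).1 hv
  rw [Finsupp.mem_supported] at hls
  rw [Finsupp.linearCombination_apply, Finsupp.sum]
  have hTT : (T†) (T (∑ i ∈ l.support, l i • η i)) = ∑ i ∈ l.support, (l i * lam i) • η i := by
    simp only [map_sum, map_smul]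
    refine Finset.sum_congr rfl fun i hi => ?_
    rw [heig i (hls hi), smul_smul, mul_comm]
  rw [← real_inner_self_eq_norm_sq, ← ContinuousLinearMap.adjoint_inner_right, hTT,
    ← real_inner_self_eq_norm_sq, hη.inner_sum, hη.inner_sum, Finset.mul_sum]
  refine Finset.sum_le_sum fun i hi => ?_
  simp only [conj_trivial]
  nlinarith [mul_self_nonneg (l i), hlam i (hls hi)]

theorem Orthonormal.norm_apply_sq_le_of_mem_topologicalClosure_span (hη : Orthonormal ℝ η)
    (heig : ∀ j ∈ s, (T†) (T (η j)) = lam j • η j) (hlam : ∀ j ∈ s, lam j ≤ c) {v : E}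
    (hv : v ∈ (span ℝ (η '' s)).topologicalClosure) : ‖T v‖ ^ 2 ≤ c * ‖v‖ ^ 2 := by
  have hclosed : IsClosed {v : E | ‖T v‖ ^ 2 ≤ c * ‖v‖ ^ 2} :=
    isClosed_le (by fun_prop) (by fun_prop)
  exact closure_minimal (fun v hv => hη.norm_apply_sq_le_of_mem_span heig hlam hv) hclosed hv

end Real

theorem norm_adjoint_sq_le_of_orthogonal_to_top_general {F G : Type*}
    [NormedAddCommGroup F] [InnerProductSpace ℝ F] [CompleteSpace F]
    [NormedAddCommGroup G] [InnerProductSpace ℝ G] [CompleteSpace G]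
    {ι : Type*} [LinearOrder ι]
    (S : F →L[ℝ] G)
    (η : ι → F) (hon : Orthonormal ℝ η)
    (lam : ι → ℝ)
    (heig : ∀ j, ContinuousLinearMap.adjoint S (S (η j)) = lam j • η j)
    (hcomplete : (Submodule.span ℝ
        (Set.range fun j => (Real.sqrt (lam j))⁻¹ • S (η j))).topologicalClosure
        = (LinearMap.range (S : F →ₗ[ℝ] G)).topologicalClosure)
    (m : ι) (h : G) (hh : ∀ j, j ≤ m → ⟪h, S (η j)⟫ = 0) :
    ‖ContinuousLinearMap.adjoint S h‖ ^ 2 ≤ sSup (lam '' {j | m < j}) * ‖h‖ ^ 2 := by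
  have hlam_eq j : lam j = ‖S (η j)‖ ^ 2 := by
    rw [← real_inner_self_eq_norm_sq, ← ContinuousLinearMap.adjoint_inner_right, heig,
      real_inner_smul_right, real_inner_self_eq_norm_sq, hon.1 j, one_pow, mul_one]
  have hbdd : BddAbove (lam '' {j | m < j}) := by
    refine ⟨‖S‖ ^ 2, ?_⟩
    rintro _ ⟨j, -, rfl⟩
    simpa [hlam_eq, hon.1 j] using pow_le_pow_left₀ (norm_nonneg _) (S.le_opNorm (η j)) 2
  have hmem : (S†) h ∈ (span ℝ (η '' {j | m < j})).topologicalClosure := by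
    refine hon.mem_topologicalClosure_span_image _ ?_ fun j hj => ?_
    · refine S.adjoint_apply_mem_topologicalClosure ((le_topologicalClosure _).trans hcomplete.ge)
        ?_ h
      rw [map_span_le]
      rintro _ ⟨j, rfl⟩
      simp only [ContinuousLinearMap.coe_coe, map_smul, heig, smul_smul]
      exact smul_mem _ _ (subset_span ⟨j, rfl⟩)
    · rw [ContinuousLinearMap.adjoint_inner_right, real_inner_comm]
      exact hh j (not_lt.1 hj)
  refine S.norm_adjoint_apply_sq_le (Real.sSup_nonneg ?_) h ?_
  · rintro _ ⟨j, -, rfl⟩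
    rw [hlam_eq]
    positivity
  · exact hon.norm_apply_sq_le_of_mem_topologicalClosure_span (fun j _ => heig j)
      (fun j hj => le_csSup hbdd ⟨j, hj, rfl⟩) hmem

/-- Let `S : F → G` be nonzero, `(η j)` an orthonormal family of eigenvectors of `S*S`
with nonincreasing positive eigenvalues `lam j`, such that the normalized images
`(√(lam j))⁻¹ • S (η j)` form a complete orthonormal system of the closure of the range
of `S`.  Fix an index `m` and suppose `h ∈ G` is orthogonal to `S (η j)` for all `j ≤ m`.
Then `‖S* h‖² ≤ λ' * ‖h‖²`, where `λ' = sup {lam j : j > m}` (interpreted as `0` if no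
index `j > m` exists, which is the real `sSup` of the empty set). -/
theorem norm_adjoint_sq_le_of_orthogonal_to_top {F G : Type*}
    [NormedAddCommGroup F] [InnerProductSpace ℝ F] [CompleteSpace F]
    [NormedAddCommGroup G] [InnerProductSpace ℝ G] [CompleteSpace G]
    {ι : Type*} [LinearOrder ι]
    (S : F →L[ℝ] G) (hS : S ≠ 0)
    (η : ι → F) (hon : Orthonormal ℝ η)
    (lam : ι → ℝ) (hanti : Antitone lam) (hpos : ∀ j, 0 < lam j)
    (heig : ∀ j, ContinuousLinearMap.adjoint S (S (η j)) = lam j • η j)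
    (hONS : Orthonormal ℝ fun j => (Real.sqrt (lam j))⁻¹ • S (η j))
    (hcomplete : (Submodule.span ℝ
        (Set.range fun j => (Real.sqrt (lam j))⁻¹ • S (η j))).topologicalClosure
        = (LinearMap.range (S : F →ₗ[ℝ] G)).topologicalClosure)
    (m : ι) (h : G) (hh : ∀ j, j ≤ m → ⟪h, S (η j)⟫ = 0) :
    ‖ContinuousLinearMap.adjoint S h‖ ^ 2 ≤ sSup (lam '' {j | m < j}) * ‖h‖ ^ 2 :=
  norm_adjoint_sq_le_of_orthogonal_to_top_general S η hon lam heig hcomplete m h hh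
end

section
/- Let S : F → G be a nonzero continuous linear map between real Hilbert spaces and let (η_j)_{j ∈ J} be an orthonormal family in F with S*(S η_j) = λ_j·η_j and λ_j > 0 for all j ∈ J. If the closed linear span of (η_j)_{j ∈ J} contains the orthogonal complement of the kernel of S, then the family (λ_j^{-1/2}·S η_j)_{j ∈ J} is a complete orthonormal system (Hilbert basis) of the closure of the range of S in G. -/
open scoped RealInnerProductSpace

/-!
Because `S* S η_j = λ_j η_j`, we have `⟪S η_i, S η_j⟫ = λ_j ⟪η_i, η_j⟫`, so the normalized images
are orthonormal. For completeness, write `x = y + z` with `y ∈ ker S` and `z ∈ (ker S)ᗮ`; then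
`S x = S z`, and `z` is a limit of finite combinations of the `η_j`, so by continuity `S x` is a
limit of finite combinations of the `S η_j`.
-/

theorem Submodule.map_topologicalClosure_le {R M N : Type*} [Semiring R]
    [TopologicalSpace M] [AddCommMonoid M] [Module R M] [ContinuousAdd M] [ContinuousConstSMul R M]
    [TopologicalSpace N] [AddCommMonoid N] [Module R N] [ContinuousAdd N] [ContinuousConstSMul R N]
    (f : M →L[R] N) (s : Submodule R M) :
    s.topologicalClosure.map (f : M →ₗ[R] N) ≤ (s.map (f : M →ₗ[R] N)).topologicalClosure :=
  image_closure_subset_closure_image f.continuous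

theorem Submodule.span_range_smul_of_ne_zero {K M ι : Type*} [DivisionRing K] [AddCommGroup M]
    [Module K M] {v : ι → M} {c : ι → K} (hc : ∀ i, c i ≠ 0) :
    span K (Set.range fun i => c i • v i) = span K (Set.range v) := by
  apply le_antisymm <;> rw [span_le] <;> rintro _ ⟨i, rfl⟩
  · exact smul_mem _ _ (subset_span ⟨i, rfl⟩)
  · have hv : v i = (c i)⁻¹ • (c i • v i) := by rw [smul_smul, inv_mul_cancel₀ (hc i), one_smul]
    rw [hv]
    exact smul_mem _ _ (subset_span ⟨i, rfl⟩)

namespace ContinuousLinearMap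

variable {𝕜 E F : Type*} [RCLike 𝕜]
  [NormedAddCommGroup E] [InnerProductSpace 𝕜 E] [CompleteSpace E]
  [NormedAddCommGroup F] [InnerProductSpace 𝕜 F]

theorem range_le_topologicalClosure_map_of_orthogonal_ker_le (S : E →L[𝕜] F)
    {V : Submodule 𝕜 E} (hV : (LinearMap.ker (S : E →ₗ[𝕜] F))ᗮ ≤ V.topologicalClosure) :
    LinearMap.range (S : E →ₗ[𝕜] F) ≤ (V.map (S : E →ₗ[𝕜] F)).topologicalClosure := by
  rintro _ ⟨x, rfl⟩
  have : CompleteSpace (LinearMap.ker (S : E →ₗ[𝕜] F)) := S.isClosed_ker.completeSpace_coe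
  obtain ⟨y, hy, z, hz, rfl⟩ := (LinearMap.ker (S : E →ₗ[𝕜] F)).exists_add_mem_mem_orthogonal x
  have hSyz : (S : E →ₗ[𝕜] F) (y + z) = S z := by
    rw [map_add, LinearMap.mem_ker.mp hy, zero_add]; rfl
  rw [hSyz]
  exact Submodule.map_topologicalClosure_le S V ⟨z, hV hz, rfl⟩

variable [CompleteSpace F]

theorem inner_map_map_of_adjoint_map_eq_smul (S : E →L[𝕜] F) {y : E} {μ : 𝕜}
    (hy : adjoint S (S y) = μ • y) (x : E) : inner 𝕜 (S x) (S y) = μ * inner 𝕜 x y := by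
  rw [← adjoint_inner_right, hy, inner_smul_right]

end ContinuousLinearMap

open ContinuousLinearMap in
theorem Orthonormal.inv_sqrt_smul_map_of_adjoint_map_eq_smul {F G ι : Type*}
    [NormedAddCommGroup F] [InnerProductSpace ℝ F] [CompleteSpace F]
    [NormedAddCommGroup G] [InnerProductSpace ℝ G] [CompleteSpace G]
    (S : F →L[ℝ] G) {η : ι → F} (hon : Orthonormal ℝ η) {lam : ι → ℝ} (hpos : ∀ j, 0 < lam j)
    (heig : ∀ j, adjoint S (S (η j)) = lam j • η j) :
    Orthonormal ℝ (fun j => (Real.sqrt (lam j))⁻¹ • S (η j)) := by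
  classical
  rw [orthonormal_iff_ite] at hon ⊢
  intro i j
  rw [real_inner_smul_left, real_inner_smul_right, inner_map_map_of_adjoint_map_eq_smul S (heig j),
    hon]
  split_ifs with hij
  · subst hij
    rw [mul_one, ← mul_assoc, ← mul_inv, Real.mul_self_sqrt (hpos i).le,
      inv_mul_cancel₀ (hpos i).ne']
  · simp

theorem normalized_images_complete_orthonormal_system_general {F G : Type*}
    [NormedAddCommGroup F] [InnerProductSpace ℝ F] [CompleteSpace F]
    [NormedAddCommGroup G] [InnerProductSpace ℝ G] [CompleteSpace G]
    {ι : Type*}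
    (S : F →L[ℝ] G)
    (η : ι → F) (hon : Orthonormal ℝ η)
    (lam : ι → ℝ) (hpos : ∀ j, 0 < lam j)
    (heig : ∀ j, ContinuousLinearMap.adjoint S (S (η j)) = lam j • η j)
    (hspan : (LinearMap.ker (S : F →ₗ[ℝ] G))ᗮ
        ≤ (Submodule.span ℝ (Set.range η)).topologicalClosure) :
    Orthonormal ℝ (fun j => (Real.sqrt (lam j))⁻¹ • S (η j)) ∧
    (Submodule.span ℝ
        (Set.range fun j => (Real.sqrt (lam j))⁻¹ • S (η j))).topologicalClosure
      = (LinearMap.range (S : F →ₗ[ℝ] G)).topologicalClosure := by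
  refine ⟨hon.inv_sqrt_smul_map_of_adjoint_map_eq_smul S hpos heig, ?_⟩
  have hspan_images : Submodule.span ℝ (Set.range fun j => (Real.sqrt (lam j))⁻¹ • S (η j))
      = (Submodule.span ℝ (Set.range η)).map (S : F →ₗ[ℝ] G) := by
    rw [Submodule.span_range_smul_of_ne_zero fun j => inv_ne_zero (Real.sqrt_ne_zero'.mpr (hpos j)),
      Submodule.map_span, ← Set.range_comp]
    rfl
  rw [hspan_images]
  apply le_antisymm
  · exact Submodule.topologicalClosure_mono LinearMap.map_le_range
  · exact Submodule.topologicalClosure_minimal _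
      (S.range_le_topologicalClosure_map_of_orthogonal_ker_le hspan)
      (Submodule.isClosed_topologicalClosure _)

/-- Let `S : F → G` be nonzero and `(η j)` an orthonormal family of eigenvectors of
`S*S` with positive eigenvalues `lam j`.  If the closed linear span of the `η j`
contains the orthogonal complement of the kernel of `S`, then the normalized images
`(√(lam j))⁻¹ • S (η j)` form a complete orthonormal system (Hilbert basis) of the
closure of the range of `S` in `G`. -/
theorem normalized_images_complete_orthonormal_system {F G : Type*}
    [NormedAddCommGroup F] [InnerProductSpace ℝ F] [CompleteSpace F]
    [NormedAddCommGroup G] [InnerProductSpace ℝ G] [CompleteSpace G]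
    {ι : Type*}
    (S : F →L[ℝ] G) (hS : S ≠ 0)
    (η : ι → F) (hon : Orthonormal ℝ η)
    (lam : ι → ℝ) (hpos : ∀ j, 0 < lam j)
    (heig : ∀ j, ContinuousLinearMap.adjoint S (S (η j)) = lam j • η j)
    (hspan : (LinearMap.ker (S : F →ₗ[ℝ] G))ᗮ
        ≤ (Submodule.span ℝ (Set.range η)).topologicalClosure) :
    Orthonormal ℝ (fun j => (Real.sqrt (lam j))⁻¹ • S (η j)) ∧
    (Submodule.span ℝ
        (Set.range fun j => (Real.sqrt (lam j))⁻¹ • S (η j))).topologicalClosure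
      = (LinearMap.range (S : F →ₗ[ℝ] G)).topologicalClosure :=
  normalized_images_complete_orthonormal_system_general S η hon lam hpos heig hspan
end

section
/- Let S : F → G be a nonzero continuous linear map between real Hilbert spaces with λ₁ := ‖S‖² > 0, and suppose there exist N orthonormal vectors e_1,…,e_N in F with S*(S e_i) = λ₁·e_i for all i. Then for every n < N, all continuous linear functionals L_1,…,L_n on F and all g_1,…,g_n ∈ G one has sup_{‖f‖_F ≤ 1} ‖S f − Σ_{j=1}^n L_j(f)·g_j‖_G ≥ ‖S‖; that is, the n-th minimal error of S with respect to the class of all continuous linear functionals equals the initial error ‖S‖ for all n < N. -/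
/-!
The vectors `e i` span an `N`-dimensional subspace of the `‖S‖²`-eigenspace of `S† S`. Fewer
than `N` functionals cannot separate the points of that subspace, so it contains a unit vector
`f` killed by every `L j`. The algorithm outputs `0` at `f`, while
`‖S f‖² = ⟪S† S f, f⟫ = ‖S‖²`, so its error at `f` is already `‖S‖`.
-/

theorem exists_ne_zero_mem_span_forall_eq_zero {K V ι κ : Type*} [Field K] [AddCommGroup V]
    [Module K V] [Fintype ι] [Fintype κ] {e : ι → V} (he : LinearIndependent K e)
    (L : κ → Module.Dual K V) (hcard : Fintype.card κ < Fintype.card ι) :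
    ∃ w ∈ Submodule.span K (Set.range e), w ≠ 0 ∧ ∀ j, L j w = 0 := by
  set W := Submodule.span K (Set.range e)
  have : FiniteDimensional K W := .span_of_finite K (Set.finite_range e)
  let φ : W →ₗ[K] κ → K := LinearMap.pi fun j => L j ∘ₗ W.subtype
  obtain ⟨x, hx, hx0⟩ := Submodule.exists_mem_ne_zero_of_ne_bot <|
    φ.ker_ne_bot_of_finrank_lt (by simpa [W, finrank_span_eq_card he] using hcard)
  exact ⟨x, x.2, by simpa using hx0, fun j => congrFun (LinearMap.mem_ker.mp hx) j⟩

theorem Submodule.span_range_le_eigenspace {K V ι : Type*} [CommRing K] [AddCommGroup V]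
    [Module K V] {T : Module.End K V} {c : K} {e : ι → V} (he : ∀ i, T (e i) = c • e i) :
    span K (Set.range e) ≤ Module.End.eigenspace T c :=
  span_le.mpr <| Set.range_subset_iff.mpr fun i => Module.End.mem_eigenspace_iff.mpr (he i)

theorem ContinuousLinearMap.norm_apply_eq_of_adjoint_apply_eq {E F : Type*}
    [NormedAddCommGroup E] [InnerProductSpace ℝ E] [CompleteSpace E]
    [NormedAddCommGroup F] [InnerProductSpace ℝ F] [CompleteSpace F]
    (S : E →L[ℝ] F) {x : E} (hx : adjoint S (S x) = ‖S‖ ^ 2 • x) :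
    ‖S x‖ = ‖S‖ * ‖x‖ := by
  have h := S.apply_norm_sq_eq_inner_adjoint_left x
  rw [comp_apply, hx, real_inner_smul_left, real_inner_self_eq_norm_sq, RCLike.re_to_real,
    ← mul_pow] at h
  exact (pow_left_inj₀ (norm_nonneg _) (by positivity) two_ne_zero).mp h

theorem ContinuousLinearMap.norm_apply_le_iSup_unitBall {𝕜 E F : Type*}
    [NontriviallyNormedField 𝕜] [SeminormedAddCommGroup E] [NormedSpace 𝕜 E]
    [SeminormedAddCommGroup F] [NormedSpace 𝕜 F] (T : E →L[𝕜] F) {x : E} (hx : ‖x‖ ≤ 1) :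
    ‖T x‖ ≤ ⨆ y : {y : E // ‖y‖ ≤ 1}, ‖T y.1‖ := by
  refine le_ciSup (f := fun y : {y : E // ‖y‖ ≤ 1} => ‖T y.1‖) ⟨‖T‖, ?_⟩ ⟨x, hx⟩
  rintro _ ⟨y, rfl⟩
  exact T.unit_le_opNorm y.1 y.2

theorem minimal_error_eq_initial_of_multiplicity_general {F G : Type*}
    [NormedAddCommGroup F] [InnerProductSpace ℝ F] [CompleteSpace F]
    [NormedAddCommGroup G] [InnerProductSpace ℝ G] [CompleteSpace G]
    (S : F →L[ℝ] G) (N : ℕ) (e : Fin N → F) (hon : Orthonormal ℝ e)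
    (heig : ∀ i, ContinuousLinearMap.adjoint S (S (e i)) = (‖S‖ ^ 2) • e i)
    (n : ℕ) (hn : n < N) (L : Fin n → F →L[ℝ] ℝ) (g : Fin n → G) :
    ‖S‖ ≤ ⨆ f : {f : F // ‖f‖ ≤ 1}, ‖S f.1 - ∑ j, L j f.1 • g j‖ := by
  obtain ⟨w, hw_span, hw0, hwL⟩ := exists_ne_zero_mem_span_forall_eq_zero
    hon.linearIndependent (fun j => (L j : F →ₗ[ℝ] ℝ)) (by simpa using hn)
  set f : F := ‖w‖⁻¹ • w
  have hf1 : ‖f‖ = 1 := norm_smul_inv_norm hw0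
  have hfL : ∀ j, L j f = 0 := fun j => by
    simp only [f, map_smul, show L j w = 0 from hwL j, smul_zero]
  have hf_eig : ContinuousLinearMap.adjoint S (S f) = ‖S‖ ^ 2 • f :=
    Module.End.mem_eigenspace_iff.mp <|
      Submodule.span_range_le_eigenspace (T := (ContinuousLinearMap.adjoint S ∘L S : F →ₗ[ℝ] F))
        heig (Submodule.smul_mem _ _ hw_span)
  let T := S - ∑ j, (L j).smulRight (g j)
  have hT : ∀ x, T x = S x - ∑ j, L j x • g j := fun x => by simp [T]
  calc ‖S‖ = ‖T f‖ := by simp [hT, hfL, S.norm_apply_eq_of_adjoint_apply_eq hf_eig, hf1]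
    _ ≤ ⨆ x : {x : F // ‖x‖ ≤ 1}, ‖T x.1‖ := T.norm_apply_le_iSup_unitBall hf1.le
    _ = _ := by simp only [hT]

/-- Let `S : F → G` be nonzero (so `λ₁ := ‖S‖² > 0`) and suppose there are `N`
orthonormal vectors `e i` in `F` with `S*S (e i) = ‖S‖² • e i`.  Then for every `n < N`,
any linear algorithm using `n` continuous linear functionals has worst-case error at
least `‖S‖` on the unit ball, i.e. the `n`-th minimal error of `S` for the class of all
continuous linear functionals equals the initial error `‖S‖` for all `n < N`. -/
theorem minimal_error_eq_initial_of_multiplicity {F G : Type*}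
    [NormedAddCommGroup F] [InnerProductSpace ℝ F] [CompleteSpace F]
    [NormedAddCommGroup G] [InnerProductSpace ℝ G] [CompleteSpace G]
    (S : F →L[ℝ] G) (hS : S ≠ 0) (N : ℕ) (e : Fin N → F) (hon : Orthonormal ℝ e)
    (heig : ∀ i, ContinuousLinearMap.adjoint S (S (e i)) = (‖S‖ ^ 2) • e i)
    (n : ℕ) (hn : n < N) (L : Fin n → F →L[ℝ] ℝ) (g : Fin n → G) :
    ‖S‖ ≤ ⨆ f : {f : F // ‖f‖ ≤ 1}, ‖S f.1 - ∑ j, L j f.1 • g j‖ :=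
  minimal_error_eq_initial_of_multiplicity_general S N e hon heig n hn L g
end

section
/- Let N ≥ 1 and let V be the real inner product space of functions f : Fin N → ℝ with ⟨f, h⟩ = N^{-1}·Σ_{i} f(i)·h(i), and let I(f) = N^{-1}·Σ_{i} f(i). Then for every n < N, every map τ : Fin n → Fin N and all reals a_1,…,a_n, one has sup_{‖f‖ ≤ 1} |I(f) − Σ_{j=1}^n a_j·f(τ(j))| ≥ √(1 − n/N). -/
/-!
A linear algorithm that samples `f` at the points `τ j` cannot see the part of `f` supported on
the at least `N - n` cells `S` it never visits. The normalized indicator `f = √(N/|S|) · 𝟙_S`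
has norm one, is invisible to the algorithm, and has mean value `√(|S|/N) ≥ √(1 - n/N)`.
-/

open Finset

section

variable {ι : Type*} [Fintype ι]

lemma abs_apply_le_sqrt_sum_sq (f : ι → ℝ) (i : ι) : |f i| ≤ √(∑ k, f k ^ 2) :=
  Real.abs_le_sqrt (single_le_sum (fun k _ ↦ sq_nonneg (f k)) (mem_univ i))

lemma isCompact_setOf_sum_sq_le (r : ℝ) : IsCompact {f : ι → ℝ | ∑ i, f i ^ 2 ≤ r} := by
  refine Metric.isCompact_of_isClosed_isBounded (isClosed_le (by fun_prop) continuous_const) ?_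
  refine (Metric.isBounded_closedBall (x := 0) (r := √r)).subset fun f hf ↦ ?_
  rw [mem_closedBall_zero_iff, pi_norm_le_iff_of_nonneg (Real.sqrt_nonneg _)]
  exact fun i ↦ (abs_apply_le_sqrt_sum_sq f i).trans (Real.sqrt_le_sqrt hf)

lemma bddAbove_range_of_weighted_sum_sq_le_one {g : (ι → ℝ) → ℝ} (hg : Continuous g) {w : ℝ}
    (hw : 0 < w) : BddAbove (Set.range fun f : {f : ι → ℝ // w * ∑ i, f i ^ 2 ≤ 1} ↦ g f.1) := by
  have hball : IsCompact {f : ι → ℝ | w * ∑ i, f i ^ 2 ≤ 1} := by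
    refine (isCompact_setOf_sum_sq_le w⁻¹).of_isClosed_subset
      (isClosed_le (by fun_prop) continuous_const) fun f hf ↦ ?_
    change _ ≤ w⁻¹
    rwa [← mul_one w⁻¹, le_inv_mul_iff₀ hw]
  refine (hball.bddAbove_image hg.continuousOn).mono ?_
  rintro _ ⟨f, rfl⟩
  exact ⟨f.1, f.2, rfl⟩

lemma exists_normalized_supported_mean_eq_sqrt [DecidableEq ι] (S : Finset ι) (hS : S.Nonempty) :
    ∃ f : ι → ℝ, (Fintype.card ι : ℝ)⁻¹ * ∑ i, f i ^ 2 = 1 ∧ (∀ i ∉ S, f i = 0) ∧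
      (Fintype.card ι : ℝ)⁻¹ * ∑ i, f i = √(#S / Fintype.card ι) := by
  set t := √(#S / Fintype.card ι : ℝ)
  have hcard : (0 : ℝ) < Fintype.card ι := by
    exact_mod_cast Fintype.card_pos_iff.mpr ⟨hS.choose⟩
  have ht : 0 < t := Real.sqrt_pos.mpr (div_pos (by exact_mod_cast hS.card_pos) hcard)
  have ht_sq : (Fintype.card ι : ℝ)⁻¹ * #S = t ^ 2 := by
    rw [Real.sq_sqrt (by positivity), inv_mul_eq_div]
  refine ⟨fun i ↦ if i ∈ S then t⁻¹ else 0, ?_, fun i hi ↦ if_neg hi, ?_⟩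
  · simp only [ite_pow, ne_eq, OfNat.ofNat_ne_zero, not_false_eq_true, zero_pow, sum_ite_mem,
      univ_inter, sum_const, nsmul_eq_mul]
    rw [← mul_assoc, ht_sq, inv_pow, mul_inv_cancel₀ (by positivity)]
  · simp only [sum_ite_mem, univ_inter, sum_const, nsmul_eq_mul]
    rw [← mul_assoc, ht_sq, sq, mul_assoc, mul_inv_cancel₀ ht.ne', mul_one]

end

lemma sub_le_card_compl_image {n N : ℕ} (τ : Fin n → Fin N) : N - n ≤ #(univ.image τ)ᶜ := by
  rw [card_compl, Fintype.card_fin]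
  have := card_image_le (s := univ) (f := τ)
  rw [card_univ, Fintype.card_fin] at this
  omega

theorem mean_value_functional_lower_bound_general (N n : ℕ) (hn : n < N)
    (τ : Fin n → Fin N) (a : Fin n → ℝ) :
    Real.sqrt (1 - (n : ℝ) / N) ≤
      ⨆ f : {f : Fin N → ℝ // (N : ℝ)⁻¹ * ∑ i, f i ^ 2 ≤ 1},
        |(N : ℝ)⁻¹ * ∑ i, f.1 i - ∑ j, a j * f.1 (τ j)| := by
  set S := (univ.image τ)ᶜ
  have hS_card : N - n ≤ #S := sub_le_card_compl_image τ
  have hN : (0 : ℝ) < N := by exact_mod_cast hn.trans_le' n.zero_le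
  obtain ⟨f, hf_norm, hf_zero, hf_mean⟩ :=
    exists_normalized_supported_mean_eq_sqrt S (card_pos.mp (by omega))
  simp only [Fintype.card_fin] at hf_norm hf_mean
  have hf_blind : ∑ j, a j * f (τ j) = 0 :=
    sum_eq_zero fun j _ ↦ by
      rw [hf_zero _ (notMem_compl.mpr (mem_image_of_mem τ (mem_univ j))), mul_zero]
  have hbdd := bddAbove_range_of_weighted_sum_sq_le_one
    (g := fun f : Fin N → ℝ ↦ |(N : ℝ)⁻¹ * ∑ i, f i - ∑ j, a j * f (τ j)|) (by fun_prop)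
    (inv_pos.mpr hN)
  refine le_trans ?_ (le_ciSup hbdd ⟨f, hf_norm.le⟩)
  rw [hf_blind, sub_zero, hf_mean, abs_of_nonneg (Real.sqrt_nonneg _)]
  gcongr
  rw [one_sub_div hN.ne', ← Nat.cast_sub hn.le]
  gcongr

/-- Model of integration on the space of functions on `[0,1]^d` that are constant on each
of the `N = 2^d` dyadic subcubes, with the `L₂` inner product `⟨f,h⟩ = N⁻¹ ∑ i, f i * h i`
(so `‖f‖² = N⁻¹ ∑ i, (f i)²`) and mean-value functional `I f = N⁻¹ ∑ i, f i`.
For every `n < N`, every choice of `n` coordinate evaluations `τ` and coefficients `a`,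
the worst-case error of the linear algorithm `f ↦ ∑ j, a j * f (τ j)` on the unit ball is
at least `√(1 - n/N)`. -/
theorem mean_value_functional_lower_bound (N n : ℕ) (hN : 1 ≤ N) (hn : n < N)
    (τ : Fin n → Fin N) (a : Fin n → ℝ) :
    Real.sqrt (1 - (n : ℝ) / N) ≤
      ⨆ f : {f : Fin N → ℝ // (N : ℝ)⁻¹ * ∑ i, f i ^ 2 ≤ 1},
        |(N : ℝ)⁻¹ * ∑ i, f.1 i - ∑ j, a j * f.1 (τ j)| :=
  mean_value_functional_lower_bound_general N n hn τ a
end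

section
/- Let N ≥ 1 and let V be the real inner product space of functions f : Fin N → ℝ with ⟨f, h⟩ = N^{-1}·Σ_{i} f(i)·h(i), and let I(f) = N^{-1}·Σ_{i} f(i). For every subset T ⊆ Fin N with |T| = n ≤ N, the linear algorithm A(f) = N^{-1}·Σ_{i ∈ T} f(i) satisfies sup_{‖f‖ ≤ 1} |I(f) − A(f)| = √(1 − n/N). Consequently, for every 0 ≤ n ≤ N, the n-th minimal worst-case error of I over algorithms using n coordinate evaluations equals √(1 − n/N). -/
/-!
An algorithm `f ↦ ∑ j, a j * f (τ j)` has error functional `⟨w, ·⟩` with representer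
`w i = 1 - N * ∑_{τ j = i} a j`, so by Cauchy–Schwarz its worst-case error is exactly `‖w‖`.
Since at most `n` coordinates are sampled, `w = 1` on at least `N - n` of them, whence
`‖w‖² ≥ 1 - n/N`; the plain average over `n` distinct coordinates has `w` the indicator of the
other `N - n`, so equality is attained.
-/

open Finset

section NormalizedInnerProduct

variable {ι : Type*} [Fintype ι]

theorem abs_inv_mul_sum_mul_le_sqrt {c : ℝ} (hc : 0 < c) (w f : ι → ℝ)
    (hf : c⁻¹ * ∑ i, f i ^ 2 ≤ 1) :
    |c⁻¹ * ∑ i, w i * f i| ≤ √(c⁻¹ * ∑ i, w i ^ 2) := by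
  apply Real.abs_le_sqrt
  calc (c⁻¹ * ∑ i, w i * f i) ^ 2 = c⁻¹ ^ 2 * (∑ i, w i * f i) ^ 2 := by ring
    _ ≤ c⁻¹ ^ 2 * ((∑ i, w i ^ 2) * ∑ i, f i ^ 2) := by
        gcongr; exact sum_mul_sq_le_sq_mul_sq _ _ _
    _ = (c⁻¹ * ∑ i, w i ^ 2) * (c⁻¹ * ∑ i, f i ^ 2) := by ring
    _ ≤ c⁻¹ * ∑ i, w i ^ 2 := by
        refine mul_le_of_le_one_right ?_ hf
        positivity

/-- The supremum is attained at `w / ‖w‖`. -/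
theorem iSup_abs_inv_mul_sum_mul_eq_sqrt {c : ℝ} (hc : 0 < c) (w : ι → ℝ) :
    ⨆ f : {f : ι → ℝ // c⁻¹ * ∑ i, f i ^ 2 ≤ 1}, |c⁻¹ * ∑ i, w i * f.1 i|
      = √(c⁻¹ * ∑ i, w i ^ 2) := by
  set s := √(c⁻¹ * ∑ i, w i ^ 2)
  have hs : s ^ 2 = c⁻¹ * ∑ i, w i ^ 2 := Real.sq_sqrt (by positivity)
  have hnorm : c⁻¹ * ∑ i, (s⁻¹ * w i) ^ 2 ≤ 1 := by
    calc c⁻¹ * ∑ i, (s⁻¹ * w i) ^ 2 = (s⁻¹ * s) ^ 2 := by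
          rw [mul_pow, hs]; simp_rw [mul_pow, ← mul_sum]; ring
      _ ≤ 1 := by
          rcases eq_or_ne s 0 with h | h
          · simp [h]
          · simp [inv_mul_cancel₀ h]
  have hval : c⁻¹ * ∑ i, w i * (s⁻¹ * w i) = s := by
    calc c⁻¹ * ∑ i, w i * (s⁻¹ * w i) = s * s * s⁻¹ := by
          rw [← sq, hs]; simp_rw [mul_left_comm _ s⁻¹, ← mul_sum, ← sq]; ring
      _ = s := mul_self_mul_inv s
  have : Nonempty {f : ι → ℝ // c⁻¹ * ∑ i, f i ^ 2 ≤ 1} := ⟨⟨0, by simp⟩⟩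
  refine ciSup_eq_of_forall_le_of_forall_lt_exists_gt
    (fun f => abs_inv_mul_sum_mul_le_sqrt hc w f.1 f.2) fun _ hlt => ?_
  refine ⟨⟨fun i => s⁻¹ * w i, hnorm⟩, ?_⟩
  rwa [hval, abs_of_nonneg (Real.sqrt_nonneg _)]

end NormalizedInnerProduct

theorem sum_mul_comp_eq_sum_fiberwise_mul {κ ι R : Type*} [Fintype κ] [Fintype ι] [DecidableEq ι]
    [CommSemiring R] (τ : κ → ι) (a : κ → R) (f : ι → R) :
    ∑ j, a j * f (τ j) = ∑ i, (∑ j with τ j = i, a j) * f i := by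
  rw [← sum_fiberwise univ τ]
  refine sum_congr rfl fun i _ => ?_
  rw [sum_mul]
  exact sum_congr rfl fun j hj => by rw [(mem_filter.1 hj).2]

section CoordinateAlgorithms

variable {N : ℕ}

/-- Worst-case error, on the unit ball of `L²` with respect to the normalized counting measure,
of an algorithm `L` for the mean value `N⁻¹ * ∑ i, f i`. -/
noncomputable def worstCaseError (L : (Fin N → ℝ) → ℝ) : ℝ :=
  ⨆ f : {f : Fin N → ℝ // (N : ℝ)⁻¹ * ∑ i, f i ^ 2 ≤ 1}, |(N : ℝ)⁻¹ * ∑ i, f.1 i - L f.1|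

variable [NeZero N]

theorem worstCaseError_eq_sqrt {L : (Fin N → ℝ) → ℝ} (w : Fin N → ℝ)
    (hL : ∀ f, (N : ℝ)⁻¹ * ∑ i, f i - L f = (N : ℝ)⁻¹ * ∑ i, w i * f i) :
    worstCaseError L = √((N : ℝ)⁻¹ * ∑ i, w i ^ 2) := by
  simp only [worstCaseError, hL]
  exact iSup_abs_inv_mul_sum_mul_eq_sqrt (Nat.cast_pos.2 (NeZero.pos N)) w

theorem worstCaseError_partialMean (T : Finset (Fin N)) :
    worstCaseError (fun f => (N : ℝ)⁻¹ * ∑ i ∈ T, f i) = √(1 - (#T : ℝ) / N) := by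
  have hc : (N : ℝ) ≠ 0 := NeZero.ne _
  rw [worstCaseError_eq_sqrt (fun i => if i ∈ Tᶜ then 1 else 0)]
  · congr 1
    simp only [ite_pow, one_pow, zero_pow two_ne_zero, sum_ite_mem, univ_inter, sum_const,
      card_compl, Fintype.card_fin, nsmul_one,
      Nat.cast_sub (T.card_le_univ.trans_eq (Fintype.card_fin N))]
    field_simp
  · intro f
    rw [← sum_compl_add_sum T, mul_add, add_sub_cancel_right]
    simp only [ite_mul, one_mul, zero_mul, sum_ite_mem, univ_inter]

theorem sqrt_one_sub_div_le_worstCaseError {n : ℕ} (τ : Fin n → Fin N) (a : Fin n → ℝ) :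
    √(1 - (n : ℝ) / N) ≤ worstCaseError (fun f => ∑ j, a j * f (τ j)) := by
  have hc : (N : ℝ) ≠ 0 := NeZero.ne _
  set w : Fin N → ℝ := fun i => 1 - N * ∑ j with τ j = i, a j
  have hw : ∀ i ∈ (univ.image τ)ᶜ, w i ^ 2 = 1 := by
    intro i hi
    have hfiber : ({j | τ j = i} : Finset (Fin n)) = ∅ := by
      ext j
      simpa using fun h : τ j = i => mem_compl.1 hi (h ▸ mem_image_of_mem τ (mem_univ j))
    simp [w, hfiber]
  have hsum : (N : ℝ) - n ≤ ∑ i, w i ^ 2 := calc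
    (N : ℝ) - n ≤ #(univ.image τ)ᶜ := by
      have himage : (#(univ.image τ) : ℝ) ≤ n := by
        exact_mod_cast card_image_le.trans_eq (card_fin n)
      rw [card_compl, Fintype.card_fin,
        Nat.cast_sub ((card_le_univ _).trans_eq (Fintype.card_fin N))]
      linarith
    _ = ∑ i ∈ (univ.image τ)ᶜ, w i ^ 2 := by rw [sum_congr rfl hw]; simp
    _ ≤ ∑ i, w i ^ 2 := sum_le_univ_sum_of_nonneg fun i => sq_nonneg _
  rw [worstCaseError_eq_sqrt w]
  · gcongr
    calc 1 - (n : ℝ) / N = (N : ℝ)⁻¹ * (N - n) := by field_simp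
      _ ≤ _ := by gcongr
  · intro f
    rw [sum_mul_comp_eq_sum_fiberwise_mul]
    simp only [w, sub_mul, one_mul, sum_sub_distrib, mul_sub, mul_assoc, ← mul_sum,
      inv_mul_cancel_left₀ hc]

theorem exists_worstCaseError_eq {n : ℕ} (hn : n ≤ N) :
    ∃ (τ : Fin n → Fin N) (a : Fin n → ℝ),
      worstCaseError (fun f => ∑ j, a j * f (τ j)) = √(1 - (n : ℝ) / N) := by
  refine ⟨Fin.castLE hn, fun _ => (N : ℝ)⁻¹, ?_⟩
  have h := worstCaseError_partialMean (univ.map (Fin.castLEEmb hn))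
  simp only [card_map, card_univ, Fintype.card_fin, sum_map] at h
  simpa [← mul_sum] using h

end CoordinateAlgorithms

/-- Model of integration on the space of functions on `[0,1]^d` that are constant on each
of the `N = 2^d` dyadic subcubes, with the `L₂` inner product `⟨f,h⟩ = N⁻¹ ∑ i, f i * h i`
(so `‖f‖² = N⁻¹ ∑ i, (f i)²`) and mean-value functional `I f = N⁻¹ ∑ i, f i`.
First part: for every subset `T` of the `N` coordinates with `|T| = n ≤ N`, the linear
algorithm `A f = N⁻¹ ∑ i ∈ T, f i` has worst-case error exactly `√(1 - n/N)` on the unit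
ball.  Second part: for every `0 ≤ n ≤ N`, the `n`-th minimal worst-case error of `I`
over all linear algorithms using `n` coordinate evaluations equals `√(1 - n/N)`. -/
theorem mean_value_functional_minimal_error (N : ℕ) (hN : 1 ≤ N) :
    (∀ (n : ℕ) (T : Finset (Fin N)), T.card = n → n ≤ N →
      (⨆ f : {f : Fin N → ℝ // (N : ℝ)⁻¹ * ∑ i, f i ^ 2 ≤ 1},
          |(N : ℝ)⁻¹ * ∑ i, f.1 i - (N : ℝ)⁻¹ * ∑ i ∈ T, f.1 i|)
        = Real.sqrt (1 - (n : ℝ) / N)) ∧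
    (∀ n : ℕ, n ≤ N →
      (⨅ (τ : Fin n → Fin N) (a : Fin n → ℝ),
        ⨆ f : {f : Fin N → ℝ // (N : ℝ)⁻¹ * ∑ i, f i ^ 2 ≤ 1},
          |(N : ℝ)⁻¹ * ∑ i, f.1 i - ∑ j, a j * f.1 (τ j)|)
        = Real.sqrt (1 - (n : ℝ) / N)) := by
  have : NeZero N := ⟨by omega⟩
  refine ⟨fun n T hT _ => hT ▸ worstCaseError_partialMean T, fun n hn => ?_⟩
  obtain ⟨τ₀, a₀, h₀⟩ := exists_worstCaseError_eq hn
  have hlb := fun (τ : Fin n → Fin N) a => sqrt_one_sub_div_le_worstCaseError τ a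
  refine le_antisymm ?_ (le_ciInf fun τ => le_ciInf fun a => hlb τ a)
  exact ciInf_le_of_le ⟨_, Set.forall_mem_range.2 fun τ => le_ciInf (hlb τ)⟩ τ₀
    (ciInf_le_of_le ⟨_, Set.forall_mem_range.2 (hlb τ₀)⟩ a₀ h₀.le)
end

section
/- Let α > 0 satisfy cos α = α·sin α, and define e : ℝ → ℝ by e(x) = cos(α·(x − 1)). Then for every function f : ℝ → ℝ that is continuously differentiable on [0,1], one has f(0)·e(0) + ∫₀¹ f'(x)·e'(x) dx = α²·∫₀¹ f(x)·e(x) dx. -/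
/-! One integration by parts, using `e'' = -α² e`, gives
`∫₀¹ f' e' = f 1 e'(1) - f 0 e'(0) + α² ∫₀¹ f e`. The boundary conditions `e'(1) = 0` and
`e'(0) = α sin α = cos α = e(0)` make the boundary terms cancel `f 0 * e 0`. -/

open Real Set intervalIntegral

theorem integral_deriv_mul_deriv_of_hasDerivAt_neg_sq_mul {a b α : ℝ} {f f' e e' : ℝ → ℝ}
    (hf : ∀ x ∈ uIcc a b, HasDerivAt f (f' x) x)
    (he' : ∀ x ∈ uIcc a b, HasDerivAt e' (-α ^ 2 * e x) x)
    (hf'int : IntervalIntegrable f' MeasureTheory.volume a b)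
    (heint : IntervalIntegrable e MeasureTheory.volume a b) :
    ∫ x in a..b, f' x * e' x = f b * e' b - f a * e' a + α ^ 2 * ∫ x in a..b, f x * e x := by
  have parts := integral_mul_deriv_eq_deriv_mul he' hf (heint.const_mul _) hf'int
  have hcomm : ∀ x, e x * f x = f x * e x := fun x => mul_comm _ _
  simp only [mul_comm (f' _), parts, neg_mul, mul_assoc, hcomm, integral_neg, integral_const_mul]
  ring

theorem hasDerivAt_mul_sub (α c x : ℝ) : HasDerivAt (fun x => α * (x - c)) α x := by
  simpa using ((hasDerivAt_id x).sub_const c).const_mul α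

theorem hasDerivAt_cos_mul_sub (α c x : ℝ) :
    HasDerivAt (fun x => cos (α * (x - c))) (-α * sin (α * (x - c))) x :=
  (hasDerivAt_mul_sub α c x).cos.congr_deriv (by ring)

theorem hasDerivAt_neg_mul_sin_mul_sub (α c x : ℝ) :
    HasDerivAt (fun x => -α * sin (α * (x - c))) (-α ^ 2 * cos (α * (x - c))) x :=
  ((hasDerivAt_mul_sub α c x).sin.const_mul (-α)).congr_deriv (by ring)

theorem eigenfunction_identity_sobolev_general (α : ℝ)
    (hcot : Real.cos α = α * Real.sin α)
    (e : ℝ → ℝ) (he : ∀ x, e x = Real.cos (α * (x - 1)))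
    (f f' : ℝ → ℝ) (hf : ∀ x ∈ Set.Icc (0 : ℝ) 1, HasDerivAt f (f' x) x)
    (hf' : ContinuousOn f' (Set.Icc (0 : ℝ) 1)) :
    f 0 * e 0 + ∫ x in (0 : ℝ)..1, f' x * deriv e x
      = α ^ 2 * ∫ x in (0 : ℝ)..1, f x * e x := by
  obtain rfl : e = fun x => cos (α * (x - 1)) := funext he
  have hde : deriv (fun x => cos (α * (x - 1))) = fun x => -α * sin (α * (x - 1)) :=
    funext fun x => (hasDerivAt_cos_mul_sub α 1 x).deriv
  rw [← uIcc_of_le zero_le_one] at hf hf'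
  rw [hde, integral_deriv_mul_deriv_of_hasDerivAt_neg_sq_mul hf
    (fun x _ => hasDerivAt_neg_mul_sin_mul_sub α 1 x) hf'.intervalIntegrable
    ((by fun_prop : Continuous fun x => cos (α * (x - 1))).intervalIntegrable 0 1)]
  simp only [sub_self, mul_zero, sin_zero, zero_sub, mul_neg, mul_one, sin_neg, cos_neg, hcot]
  ring

/-- Let `α > 0` satisfy `cos α = α·sin α` and let `e x = cos (α·(x-1))`.  Then for every
function `f : ℝ → ℝ` that is continuously differentiable on `[0,1]` (with derivative `f'`),
one has `f 0 * e 0 + ∫₀¹ f' x * e' x dx = α² * ∫₀¹ f x * e x dx`; that is, `e` is an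
eigenfunction with eigenvalue `α⁻²` of `W = APP*∘APP` for the Sobolev space with inner
product `⟨f,h⟩ = f 0 * h 0 + ∫₀¹ f' h'`. -/
theorem eigenfunction_identity_sobolev (α : ℝ) (hα : 0 < α)
    (hcot : Real.cos α = α * Real.sin α)
    (e : ℝ → ℝ) (he : ∀ x, e x = Real.cos (α * (x - 1)))
    (f f' : ℝ → ℝ) (hf : ∀ x ∈ Set.Icc (0 : ℝ) 1, HasDerivAt f (f' x) x)
    (hf' : ContinuousOn f' (Set.Icc (0 : ℝ) 1)) :
    f 0 * e 0 + ∫ x in (0 : ℝ)..1, f' x * deriv e x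
      = α ^ 2 * ∫ x in (0 : ℝ)..1, f x * e x :=
  eigenfunction_identity_sobolev_general α hcot e he f f' hf hf'
end

section
/- The unique α ∈ (0, π) satisfying cos α = α·sin α satisfies α² < 3/4; equivalently, λ₁ := α^{-2} > 4/3. -/
/-!
Since `sin (y - x) = cos x sin y - cos y sin x`, the ratio `cos / sin = cot` decreases on
`(0, π)`, so the root of `cot α = α` lies below every `c ∈ (0, π)` with `cot c < c`. At
`c = √3 / 2` this follows from the Taylor bounds `sin c ≥ c - c³/6` and
`|cos c - (1 - c²/2)| ≤ 5 c⁴ / 96`, which give `c sin c ≥ 21/32 > 1005/1536 ≥ cos c`.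
-/

open Real

lemma cos_mul_sin_le_cos_mul_sin {x y : ℝ} (hxy : x ≤ y) (hyx : y ≤ x + π) :
    cos y * sin x ≤ cos x * sin y := by
  have h : 0 ≤ sin (y - x) := sin_nonneg_of_nonneg_of_le_pi (by linarith) (by linarith)
  rw [sin_sub] at h
  linarith

lemma lt_of_cos_eq_mul_sin {α c : ℝ} (hc : 0 < c) (hαπ : α < π)
    (hα : cos α = α * sin α) (hcot : cos c < c * sin c) : α < c := by
  by_contra! hcα
  have hsinc : 0 < sin c := sin_pos_of_pos_of_lt_pi hc (by linarith)
  have hsinα : 0 < sin α := sin_pos_of_pos_of_lt_pi (by linarith) hαπ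
  have := calc
    α * sin c * sin α = cos α * sin c := by rw [hα]; ring
    _ ≤ cos c * sin α := cos_mul_sin_le_cos_mul_sin hcα (by linarith [pi_pos])
    _ < c * sin c * sin α := mul_lt_mul_of_pos_right hcot hsinα
    _ ≤ α * sin c * sin α := by gcongr
  exact lt_irrefl _ this

lemma cos_lt_mul_sin_of_sq_eq_three_fourths {c : ℝ} (hc0 : 0 ≤ c) (hc : c ^ 2 = 3 / 4) :
    cos c < c * sin c := by
  have hc1 : |c| ≤ 1 := by rw [abs_of_nonneg hc0]; nlinarith
  have hcos := (abs_le.mp (cos_bound hc1)).2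
  have hsin := mul_le_mul_of_nonneg_left (sin_ge_sub_cube hc0) hc0
  rw [abs_of_nonneg hc0] at hcos
  nlinarith

/-- The unique `α ∈ (0, π)` with `cos α = α·sin α` (i.e. `cot α = α`) satisfies
`α² < 3/4`; equivalently, the largest eigenvalue `λ₁ = α⁻²` of `W = APP*∘APP` for
`L₂`-approximation on the Sobolev space with kernel `K(x,y) = 1 + min(x,y)` satisfies
`λ₁ > 4/3`, the squared norm of the integration functional on that space. -/
theorem top_eigenvalue_gt_four_thirds (α : ℝ) (hα0 : 0 < α) (hαπ : α < Real.pi)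
    (hcot : Real.cos α = α * Real.sin α) :
    α ^ 2 < 3 / 4 ∧ 4 / 3 < (α ^ 2)⁻¹ := by
  set c := √3 / 2
  have hc0 : 0 < c := by positivity
  have hc : c ^ 2 = 3 / 4 := by rw [div_pow, sq_sqrt zero_le_three]; norm_num
  have hαc : α < c :=
    lt_of_cos_eq_mul_sin hc0 hαπ hcot (cos_lt_mul_sin_of_sq_eq_three_fourths hc0.le hc)
  have hsq : α ^ 2 < 3 / 4 := hc ▸ pow_lt_pow_left₀ hαc hα0.le two_ne_zero
  refine ⟨hsq, ?_⟩
  calc (4 / 3 : ℝ) = (3 / 4)⁻¹ := by norm_num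
    _ < (α ^ 2)⁻¹ := inv_strictAnti₀ (by positivity) hsq
end
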